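/- Let Ā be any n×n real symmetric matrix, let w₁,…,w_n > 0 with W = diag(w) and w_min = min_i w_i, and suppose max_i |d_i/w_i − 1| ≤ η and ‖A − Ā‖₂ ≤ t for some η, t ≥ 0. Then ‖D^{-1/2} A D^{-1/2} − W^{-1/2} Ā W^{-1/2}‖₂ ≤ 2η + η² + t/w_min. -/

import Mathlib

open Matrix Finset

/-- Spectral norm of a matrix: the operator norm induced by the Euclidean vector norm. -/
noncomputable def sNorm {n : ℕ} (M : Matrix (Fin n) (Fin n) ℝ) : ℝ :=
  ‖Matrix.toEuclideanCLM (𝕜 := ℝ) M‖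

/-!
With `N = D^{-1/2} A D^{-1/2}` and `F = diag(√(dᵢ/wᵢ)) - 1` we have `W^{-1/2} = (1 + F) D^{-1/2}`,
so `N - W^{-1/2} Ā W^{-1/2} = (N - (1 + F) N (1 + F)) + W^{-1/2} (A - Ā) W^{-1/2}`.
The first term is `-(F N + N F + F N F)`, where `‖N‖ ≤ 1` by a weighted Cauchy–Schwarz and
`‖F‖ ≤ η` because `|√x - 1| ≤ |x - 1|`; the second is at most `t / w_min`.
-/

open Real
open scoped Matrix.Norms.L2Operator

lemma sNorm_eq_norm {n : ℕ} (M : Matrix (Fin n) (Fin n) ℝ) : sNorm M = ‖M‖ := rfl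

lemma Real.abs_sqrt_sub_one_le (x : ℝ) : |√x - 1| ≤ |x - 1| := by
  rcases le_or_gt 0 x with hx | hx
  · have hfactor : x - 1 = (√x - 1) * (√x + 1) := by
      linear_combination -sq_sqrt hx
    rw [hfactor, abs_mul]
    exact le_mul_of_one_le_right (abs_nonneg _)
      (by rw [abs_of_pos (by positivity)]; linarith [sqrt_nonneg x])
  · rw [sqrt_eq_zero_of_nonpos hx.le, abs_of_neg (by linarith), abs_of_neg (by linarith)]
    linarith

lemma norm_sub_one_add_mul_mul_one_add_le {R : Type*} [NormedRing R] (a f : R) :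
    ‖a - (1 + f) * a * (1 + f)‖ ≤ (2 * ‖f‖ + ‖f‖ ^ 2) * ‖a‖ := by
  have hexpand : a - (1 + f) * a * (1 + f) = -(f * a + a * f + f * a * f) := by noncomm_ring
  calc ‖a - (1 + f) * a * (1 + f)‖ ≤ ‖f * a‖ + ‖a * f‖ + ‖f * a * f‖ := by
        rw [hexpand, norm_neg]; exact norm_add₃_le
    _ ≤ ‖f‖ * ‖a‖ + ‖a‖ * ‖f‖ + ‖f‖ * ‖a‖ * ‖f‖ := by
        gcongr
        · exact norm_mul_le _ _
        · exact norm_mul_le _ _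
        · exact norm_mul₃_le
    _ = (2 * ‖f‖ + ‖f‖ ^ 2) * ‖a‖ := by ring

namespace Matrix

variable {ι : Type*} [Fintype ι] [DecidableEq ι]

lemma l2_opNorm_le_of_sum_sq_mulVec_le (M : Matrix ι ι ℝ) {c : ℝ} (hc : 0 ≤ c)
    (h : ∀ x : ι → ℝ, ∑ i, (M *ᵥ x) i ^ 2 ≤ c ^ 2 * ∑ i, x i ^ 2) : ‖M‖ ≤ c := by
  rw [← l2_opNorm_toEuclideanCLM]
  refine ContinuousLinearMap.opNorm_le_bound _ hc fun x ↦ ?_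
  refine (sq_le_sq₀ (norm_nonneg _) (by positivity)).mp ?_
  simpa [EuclideanSpace.norm_sq_eq, mul_pow] using h x

lemma l2_opNorm_diagonal_le {v : ι → ℝ} {c : ℝ} (hc : 0 ≤ c) (hv : ∀ i, |v i| ≤ c) :
    ‖diagonal v‖ ≤ c := by
  rw [l2_opNorm_diagonal, pi_norm_le_iff_of_nonneg hc]
  exact hv

noncomputable def symmNormalize (v : ι → ℝ) (M : Matrix ι ι ℝ) : Matrix ι ι ℝ :=
  diagonal (fun i => (Real.sqrt (v i))⁻¹) * M * diagonal (fun i => (Real.sqrt (v i))⁻¹)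

lemma symmNormalize_sub (v : ι → ℝ) (M M' : Matrix ι ι ℝ) :
    symmNormalize v (M - M') = symmNormalize v M - symmNormalize v M' := by
  simp only [symmNormalize, Matrix.mul_sub, Matrix.sub_mul]

lemma symmNormalize_mulVec (v : ι → ℝ) (M : Matrix ι ι ℝ) (x : ι → ℝ) (i : ι) :
    (symmNormalize v M *ᵥ x) i = (√(v i))⁻¹ * ∑ j, M i j * ((√(v j))⁻¹ * x j) := by
  simp only [symmNormalize, mulVec, dotProduct, mul_diagonal, diagonal_mul, Finset.mul_sum]
  exact Finset.sum_congr rfl fun j _ => by ring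

lemma symmNormalize_eq_diagonal_mul_symmNormalize_mul {d : ι → ℝ} (hd : ∀ i, 0 < d i)
    (w : ι → ℝ) (M : Matrix ι ι ℝ) :
    symmNormalize w M = diagonal (fun i => √(d i / w i)) * symmNormalize d M *
      diagonal (fun i => √(d i / w i)) := by
  have hscale : (fun i => √(d i / w i) * (√(d i))⁻¹) = fun i => (√(w i))⁻¹ := by
    funext i
    have := (sqrt_pos.2 (hd i)).ne'
    rw [sqrt_div (hd i).le]
    field_simp
  simp only [symmNormalize, ← Matrix.mul_assoc, diagonal_mul_diagonal, hscale]
  simp only [Matrix.mul_assoc, diagonal_mul_diagonal, mul_comm (√(d _))⁻¹, hscale]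

lemma l2_opNorm_symmNormalize_le_div {w : ι → ℝ} {c : ℝ} (hc : 0 < c) (hw : ∀ i, c ≤ w i)
    (M : Matrix ι ι ℝ) : ‖symmNormalize w M‖ ≤ ‖M‖ / c := by
  have hdiag : ‖diagonal (fun i => (√(w i))⁻¹)‖ ≤ (√c)⁻¹ := by
    refine l2_opNorm_diagonal_le (by positivity) fun i => ?_
    rw [abs_of_nonneg (by positivity)]
    gcongr
    exact hw i
  calc ‖symmNormalize w M‖
      ≤ ‖diagonal (fun i => (√(w i))⁻¹)‖ * ‖M‖ * ‖diagonal (fun i => (√(w i))⁻¹)‖ :=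
        norm_mul₃_le
    _ ≤ (√c)⁻¹ * ‖M‖ * (√c)⁻¹ := by gcongr
    _ = ‖M‖ / c := by
        rw [mul_comm, ← mul_assoc, ← mul_inv, mul_self_sqrt hc.le, inv_mul_eq_div]

lemma l2_opNorm_symmNormalize_le_one {A : Matrix ι ι ℝ} (hA : A.IsSymm)
    (hA0 : ∀ i j, 0 ≤ A i j) {d : ι → ℝ} (hd : ∀ i, d i = ∑ j, A i j) (hdpos : ∀ i, 0 < d i) :
    ‖symmNormalize d A‖ ≤ 1 := by
  refine l2_opNorm_le_of_sum_sq_mulVec_le _ zero_le_one fun x => ?_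
  set y : ι → ℝ := fun j => (√(d j))⁻¹ * x j
  have hy : ∀ j, y j ^ 2 = x j ^ 2 / d j := fun j => by
    rw [mul_pow, inv_pow, sq_sqrt (hdpos j).le, inv_mul_eq_div]
  have hcol : ∀ j, ∑ i, A i j = d j := fun j => by
    rw [hd j]
    exact Finset.sum_congr rfl fun i _ => hA.apply j i
  -- Cauchy–Schwarz with weights `A i j`, whose total is `d i`
  have hrow : ∀ i, (∑ j, A i j * y j) ^ 2 ≤ d i * ∑ j, A i j * y j ^ 2 := fun i => by
    rw [hd i]
    exact sum_sq_le_sum_mul_sum_of_sq_le_mul _ (fun j _ => hA0 i j)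
      (fun j _ => mul_nonneg (hA0 i j) (sq_nonneg _)) fun j _ => le_of_eq (by ring)
  calc ∑ i, (symmNormalize d A *ᵥ x) i ^ 2
      = ∑ i, (d i)⁻¹ * (∑ j, A i j * y j) ^ 2 := by
        refine Finset.sum_congr rfl fun i _ => ?_
        rw [symmNormalize_mulVec, mul_pow, inv_pow, sq_sqrt (hdpos i).le]
    _ ≤ ∑ i, (d i)⁻¹ * (d i * ∑ j, A i j * y j ^ 2) :=
        sum_le_sum fun i _ => mul_le_mul_of_nonneg_left (hrow i) (inv_nonneg.2 (hdpos i).le)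
    _ = ∑ j, (∑ i, A i j) * y j ^ 2 := by
        simp only [inv_mul_cancel_left₀ (hdpos _).ne', Finset.sum_mul]
        exact Finset.sum_comm
    _ = 1 ^ 2 * ∑ j, x j ^ 2 := by
        simp only [hcol, hy, one_pow, one_mul, mul_div_cancel₀ _ (hdpos _).ne']

end Matrix

theorem normalized_adjacency_perturbation_bound_general
    (n : ℕ) [NeZero n]
    (A : Matrix (Fin n) (Fin n) ℝ) (hAsymm : A.IsSymm) (hA0 : ∀ i j, 0 ≤ A i j)
    (d : Fin n → ℝ) (hd : ∀ i, d i = ∑ j, A i j) (hdpos : ∀ i, 0 < d i)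
    (Abar : Matrix (Fin n) (Fin n) ℝ)
    (w : Fin n → ℝ) (hw : ∀ i, 0 < w i)
    (η t : ℝ) (hη : 0 ≤ η)
    (hdw : ∀ i, |d i / w i - 1| ≤ η)
    (hAt : sNorm (A - Abar) ≤ t) :
    sNorm (Matrix.diagonal (fun i => (Real.sqrt (d i))⁻¹) * A *
        Matrix.diagonal (fun i => (Real.sqrt (d i))⁻¹) -
      Matrix.diagonal (fun i => (Real.sqrt (w i))⁻¹) * Abar *
        Matrix.diagonal (fun i => (Real.sqrt (w i))⁻¹)) ≤
      2 * η + η ^ 2 + t / univ.inf' univ_nonempty w := by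
  set wmin := univ.inf' univ_nonempty w
  have hwmin : 0 < wmin := (lt_inf'_iff _).2 fun i _ => hw i
  set F : Matrix (Fin n) (Fin n) ℝ := diagonal (fun i => √(d i / w i) - 1)
  have hG : diagonal (fun i => √(d i / w i)) = 1 + F := by
    rw [← diagonal_one, diagonal_add]; simp
  have hF : ‖F‖ ≤ η :=
    l2_opNorm_diagonal_le hη fun i => (Real.abs_sqrt_sub_one_le _).trans (hdw i)
  have hN : ‖symmNormalize d A‖ ≤ 1 := l2_opNorm_symmNormalize_le_one hAsymm hA0 hd hdpos
  have hsplit : symmNormalize d A - symmNormalize w Abar =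
      (symmNormalize d A - (1 + F) * symmNormalize d A * (1 + F)) +
        symmNormalize w (A - Abar) := by
    rw [symmNormalize_sub, symmNormalize_eq_diagonal_mul_symmNormalize_mul hdpos w A, hG]
    abel
  rw [sNorm_eq_norm] at hAt ⊢
  change ‖symmNormalize d A - symmNormalize w Abar‖ ≤ _
  calc ‖symmNormalize d A - symmNormalize w Abar‖
      ≤ (2 * ‖F‖ + ‖F‖ ^ 2) * ‖symmNormalize d A‖ + ‖A - Abar‖ / wmin := by
        rw [hsplit]
        exact (norm_add_le _ _).trans (add_le_add (norm_sub_one_add_mul_mul_one_add_le _ _)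
          (l2_opNorm_symmNormalize_le_div hwmin (fun i => inf'_le _ (mem_univ i)) _))
    _ ≤ (2 * η + η ^ 2) * 1 + t / wmin := by gcongr
    _ = 2 * η + η ^ 2 + t / wmin := by ring

/-- if `max_i |d_i/w_i − 1| ≤ η` and `‖A − Ā‖₂ ≤ t`, then
`‖D^{-1/2} A D^{-1/2} − W^{-1/2} Ā W^{-1/2}‖₂ ≤ 2η + η² + t/w_min`. -/
theorem normalized_adjacency_perturbation_bound
    (n : ℕ) [NeZero n]
    (A : Matrix (Fin n) (Fin n) ℝ) (hAsymm : A.IsSymm) (hA0 : ∀ i j, 0 ≤ A i j)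
    (d : Fin n → ℝ) (hd : ∀ i, d i = ∑ j, A i j) (hdpos : ∀ i, 0 < d i)
    (Abar : Matrix (Fin n) (Fin n) ℝ) (hAbarSymm : Abar.IsSymm)
    (w : Fin n → ℝ) (hw : ∀ i, 0 < w i)
    (η t : ℝ) (hη : 0 ≤ η) (ht : 0 ≤ t)
    (hdw : ∀ i, |d i / w i - 1| ≤ η)
    (hAt : sNorm (A - Abar) ≤ t) :
    sNorm (Matrix.diagonal (fun i => (Real.sqrt (d i))⁻¹) * A *
        Matrix.diagonal (fun i => (Real.sqrt (d i))⁻¹) -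
      Matrix.diagonal (fun i => (Real.sqrt (w i))⁻¹) * Abar *
        Matrix.diagonal (fun i => (Real.sqrt (w i))⁻¹)) ≤
      2 * η + η ^ 2 + t / univ.inf' univ_nonempty w :=
  normalized_adjacency_perturbation_bound_general n A hAsymm hA0 d hd hdpos Abar w hw η t hη hdw hAt
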